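/- arXiv:2502.05619 — 6 statements merged into one kernel-verified Lean document; each statement's English description precedes it below -/
import Mathlib

section
/- Let E be an n-dimensional solvable evolution algebra with maximum index of solvability. Then the penultimate term of its derived series, E^(n-1), has at most two subalgebras (besides 0 and itself proper ones are one-dimensional). -/
open Submodule

variable {K : Type} [Field K] {E : Type} [AddCommGroup E] [Module K E]

/-- The product of two submodules under a bilinear multiplication. -/
def mulSet (μ : E →ₗ[K] E →ₗ[K] E) (U V : Submodule K E) : Submodule K E :=
  Submodule.span K {z | ∃ u ∈ U, ∃ v ∈ V, z = μ u v}

/-- Derived series starting from a submodule: `dser μ I 0 = I`,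
`dser μ I (k+1) = (dser μ I k)·(dser μ I k)`.  Thus `dser μ ⊤ (k-1) = E^(k)`. -/
def dser (μ : E →ₗ[K] E →ₗ[K] E) (I : Submodule K E) : ℕ → Submodule K E
  | 0 => I
  | k + 1 => mulSet μ (dser μ I k) (dser μ I k)

/-- Lower central-type series: `lowerPow μ k = E^(k+1)` where
`E^1 = E` and `E^(k+1) = Σ_{i=1}^k E^i E^(k+1-i)`. -/
def lowerPow (μ : E →ₗ[K] E →ₗ[K] E) : ℕ → Submodule K E
  | 0 => ⊤
  | k + 1 => ⨆ i : Fin (k + 1), mulSet μ (lowerPow μ i.1) (lowerPow μ (k - i.1))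
  decreasing_by
  · exact i.2
  · omega

/-- A submodule closed under the multiplication. -/
def IsSubalg (μ : E →ₗ[K] E →ₗ[K] E) (U : Submodule K E) : Prop :=
  ∀ x ∈ U, ∀ y ∈ U, μ x y ∈ U

/-- A (two-sided) ideal. -/
def IsIdeal (μ : E →ₗ[K] E →ₗ[K] E) (I : Submodule K E) : Prop :=
  ∀ x ∈ I, ∀ y : E, μ x y ∈ I ∧ μ y x ∈ I

/-- Subalgebra generated by a set. -/
def gen (μ : E →ₗ[K] E →ₗ[K] E) (s : Set E) : Submodule K E :=
  sInf {W | IsSubalg μ W ∧ s ⊆ W}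

/-- Quasi-ideal: the subalgebra generated together with any subalgebra is the vector-space sum. -/
def QuasiIdeal (μ : E →ₗ[K] E →ₗ[K] E) (U : Submodule K E) : Prop :=
  IsSubalg μ U ∧ ∀ V : Submodule K E, IsSubalg μ V → gen μ (↑U ∪ ↑V) = U ⊔ V

/-- The subalgebra lattice is modular. -/
def ModularLat (μ : E →ₗ[K] E →ₗ[K] E) : Prop :=
  ∀ U V W : Submodule K E, IsSubalg μ U → IsSubalg μ V → IsSubalg μ W → U ≤ W →
    gen μ (↑U ∪ ↑(V ⊓ W)) = gen μ (↑U ∪ ↑V) ⊓ W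

/-- The subalgebra lattice is distributive. -/
def DistribLat (μ : E →ₗ[K] E →ₗ[K] E) : Prop :=
  ∀ U V W : Submodule K E, IsSubalg μ U → IsSubalg μ V → IsSubalg μ W →
    gen μ (↑U ∪ ↑(V ⊓ W)) = gen μ (↑U ∪ ↑V) ⊓ gen μ (↑U ∪ ↑W)

/-- Supersolvable: a complete flag of ideals. -/
def Supersolvable (μ : E →ₗ[K] E →ₗ[K] E) : Prop :=
  ∃ I : ℕ → Submodule K E, (∀ i, IsIdeal μ (I i)) ∧ (∀ i, I i ≤ I (i + 1)) ∧
    (∀ i ≤ Module.finrank K E, Module.finrank K (I i) = i) ∧ I (Module.finrank K E) = ⊤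

/-- Maximal subalgebra `A` of the subalgebra `B`. -/
def MaxIn (μ : E →ₗ[K] E →ₗ[K] E) (A B : Submodule K E) : Prop :=
  A ≤ B ∧ A ≠ B ∧ ∀ W : Submodule K E, IsSubalg μ W → A ≤ W → W ≤ B → W = A ∨ W = B

/-!
By maximality of the index the derived series loses exactly one dimension at each step, so
`A := E^(n-1)` is a plane, `A² = E^(n)` is a line and `A²A² = 0`. A one-dimensional subalgebra
`U ≤ A` consists of square-zero elements: if `z² ≠ 0` for `z ∈ U`, then `U = K z² ≤ A²`, whence
`z² ∈ A²A² = 0`.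

If `2 ≠ 0` in `K`, three distinct square-zero lines `K x`, `K y`, `K (a x + d y)` in `A` give
`2ad · xy = 0`, so `A² = 0`, which is absurd. If `2 = 0`, write `z² = ∑ zᵢ² eᵢ²` in the natural
basis: since `E²` has codimension one, the map `a ↦ ∑ aᵢ eᵢ²` has a one-dimensional kernel, which
contains `(zᵢ²)ᵢ` for every square-zero `z`; squaring being injective in characteristic two, all
square-zero elements of `E` lie on a single line.
-/

open Module

section

variable {μ : E →ₗ[K] E →ₗ[K] E}

theorem mulSet_eq_map₂ (μ : E →ₗ[K] E →ₗ[K] E) (U V : Submodule K E) :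
    mulSet μ U V = map₂ μ U V := by
  rw [map₂_eq_span_image2, mulSet]
  congr 1
  ext z
  simp [Set.mem_image2, eq_comm]

theorem mem_mulSet {U V : Submodule K E} {u v : E} (hu : u ∈ U) (hv : v ∈ V) :
    μ u v ∈ mulSet μ U V :=
  mulSet_eq_map₂ μ U V ▸ apply_mem_map₂ μ hu hv

theorem mulSet_mono {U V U' V' : Submodule K E} (hU : U ≤ U') (hV : V ≤ V') :
    mulSet μ U V ≤ mulSet μ U' V' := by
  simpa only [mulSet_eq_map₂] using map₂_le_map₂ hU hV

theorem mulSet_le_iff {U V W : Submodule K E} :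
    mulSet μ U V ≤ W ↔ ∀ u ∈ U, ∀ v ∈ V, μ u v ∈ W := by
  rw [mulSet_eq_map₂, map₂_le]

theorem mulSet_span_span (s t : Set E) :
    mulSet μ (span K s) (span K t) = span K (Set.image2 (fun x y => μ x y) s t) := by
  rw [mulSet_eq_map₂, map₂_span_span]

theorem dser_succ (I : Submodule K E) (k : ℕ) :
    dser μ I (k + 1) = mulSet μ (dser μ I k) (dser μ I k) :=
  rfl

theorem dser_top_succ_le (k : ℕ) : dser μ ⊤ (k + 1) ≤ dser μ ⊤ k := by
  induction k with
  | zero => exact le_top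
  | succ k ih => exact mulSet_mono ih ih

theorem dser_eq_of_succ_eq {I : Submodule K E} {k j : ℕ} (h : dser μ I (k + 1) = dser μ I k)
    (hkj : k ≤ j) : dser μ I j = dser μ I k := by
  induction j, hkj using Nat.le_induction with
  | base => rfl
  | succ j _ ih => rw [dser_succ, ih, ← dser_succ, h]

theorem dser_top_succ_lt {n k : ℕ} (hbot : dser μ ⊤ n = ⊥) (hne : dser μ ⊤ (n - 1) ≠ ⊥)
    (hk : k < n) : dser μ ⊤ (k + 1) < dser μ ⊤ k := by
  refine (dser_top_succ_le k).lt_of_ne fun h => hne ?_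
  rw [dser_eq_of_succ_eq h (by omega), ← dser_eq_of_succ_eq h hk.le, hbot]

theorem finrank_add_le_of_succ_lt [FiniteDimensional K E] {f : ℕ → Submodule K E} {n : ℕ}
    (hf : ∀ k < n, f (k + 1) < f k) (j : ℕ) :
    ∀ d, j + d ≤ n → finrank K (f (j + d)) + d ≤ finrank K (f j)
  | 0, _ => le_rfl
  | d + 1, h => by
    have hlt := Submodule.finrank_lt_finrank_of_lt (hf (j + d) (by omega))
    have ih := finrank_add_le_of_succ_lt hf j d (by omega)
    rw [← add_assoc j d 1]
    omega

theorem finrank_eq_sub_of_succ_lt [FiniteDimensional K E] {f : ℕ → Submodule K E} {n : ℕ}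
    (hE : finrank K E = n) (hf : ∀ k < n, f (k + 1) < f k) {k : ℕ} (hk : k ≤ n) :
    finrank K (f k) = n - k := by
  have upper := finrank_add_le_of_succ_lt hf 0 k (by omega)
  have lower := finrank_add_le_of_succ_lt hf k (n - k) (by omega)
  have hf0 := Submodule.finrank_le (f 0)
  rw [zero_add] at upper
  rw [Nat.add_sub_cancel' hk] at lower
  omega

theorem finrank_dser_top [FiniteDimensional K E] {n : ℕ} (hE : finrank K E = n)
    (hbot : dser μ ⊤ n = ⊥) (hne : dser μ ⊤ (n - 1) ≠ ⊥) {k : ℕ} (hk : k ≤ n) :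
    finrank K (dser μ ⊤ k) = n - k :=
  finrank_eq_sub_of_succ_lt hE (fun _ => dser_top_succ_lt hbot hne) hk

theorem exists_mem_ne_zero_of_finrank_eq_one {U : Submodule K E} (hU : finrank K U = 1) :
    ∃ x ∈ U, x ≠ 0 :=
  exists_mem_ne_zero_of_ne_bot (isAtom_iff_finrank_eq_one.mpr hU).ne_bot

theorem eq_of_mem_of_finrank_eq_one {U V : Submodule K E} (hU : finrank K U = 1)
    (hV : finrank K V = 1) {x : E} (hxU : x ∈ U) (hxV : x ∈ V) (hx : x ≠ 0) : U = V :=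
  (eq_span_singleton_of_mem_of_finrank_eq_one hU hxU hx).trans
    (eq_span_singleton_of_mem_of_finrank_eq_one hV hxV hx).symm

theorem sup_eq_of_finrank_eq_one {U V A : Submodule K E}
    (hU : finrank K U = 1) (hV : finrank K V = 1) (hUV : U ≠ V) (hUA : U ≤ A) (hVA : V ≤ A)
    (hA : finrank K A = 2) : U ⊔ V = A := by
  have : FiniteDimensional K U := Module.finite_of_finrank_pos (by omega)
  have : FiniteDimensional K V := Module.finite_of_finrank_pos (by omega)
  have : FiniteDimensional K A := Module.finite_of_finrank_pos (by omega)
  have hinf : U ⊓ V = ⊥ :=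
    ((isAtom_iff_finrank_eq_one.mpr hU).disjoint_of_ne
      (isAtom_iff_finrank_eq_one.mpr hV) hUV).eq_bot
  refine eq_of_le_of_finrank_le (sup_le hUA hVA) ?_
  have := finrank_sup_add_finrank_inf_eq U V
  rw [hinf, finrank_bot, hU, hV] at this
  omega

def lineSubalgs (μ : E →ₗ[K] E →ₗ[K] E) (A : Submodule K E) : Set (Submodule K E) :=
  {U | U ≤ A ∧ IsSubalg μ U ∧ finrank K U = 1}

theorem IsSubalg.mul_self_eq_zero {U A : Submodule K E} (hU : IsSubalg μ U)
    (hU1 : finrank K U = 1) (hUA : U ≤ A) (hA : mulSet μ (mulSet μ A A) (mulSet μ A A) = ⊥)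
    {z : E} (hz : z ∈ U) : μ z z = 0 := by
  by_contra h
  have hUA2 : U ≤ mulSet μ A A := by
    rw [eq_span_singleton_of_mem_of_finrank_eq_one hU1 (hU z hz z hz) h,
      span_singleton_le_iff_mem]
    exact mem_mulSet (hUA hz) (hUA hz)
  have hzz := mem_mulSet (μ := μ) (hUA2 hz) (hUA2 hz)
  rw [hA, mem_bot] at hzz
  exact h hzz

theorem mul_eq_zero_of_mul_self_eq_zero (hcomm : ∀ x y : E, μ x y = μ y x) (h2 : (2 : K) ≠ 0)
    {x y : E} {a d : K} (ha : a ≠ 0) (hd : d ≠ 0) (hx : μ x x = 0) (hy : μ y y = 0)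
    (hxy : μ (a • x + d • y) (a • x + d • y) = 0) : μ x y = 0 := by
  have h : (2 * a * d) • μ x y = 0 := by
    rw [← hxy]
    simp only [map_add, map_smul, LinearMap.add_apply, LinearMap.smul_apply, hx, hy, hcomm y x]
    module
  exact (smul_eq_zero.mp h).resolve_left (by simp [h2, ha, hd])

theorem mulSet_span_pair_eq_bot (hcomm : ∀ x y : E, μ x y = μ y x) {x y : E} (hx : μ x x = 0)
    (hy : μ y y = 0) (hxy : μ x y = 0) : mulSet μ (span K {x, y}) (span K {x, y}) = ⊥ := by
  rw [mulSet_span_span, span_eq_bot]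
  rintro _ ⟨u, hu, v, hv, rfl⟩
  rcases hu with rfl | rfl <;> rcases hv with rfl | rfl
  exacts [hx, hxy, (hcomm _ _).trans hxy, hy]

theorem ncard_lineSubalgs_le_two (hcomm : ∀ x y : E, μ x y = μ y x) (h2 : (2 : K) ≠ 0)
    {A : Submodule K E} (hA : finrank K A = 2) (hAA : mulSet μ A A ≠ ⊥)
    (hAAAA : mulSet μ (mulSet μ A A) (mulSet μ A A) = ⊥) :
    (lineSubalgs μ A).ncard ≤ 2 := by
  by_contra hcard
  obtain ⟨U₁, ⟨hU₁A, hU₁, hU₁1⟩, U₂, ⟨hU₂A, hU₂, hU₂1⟩, U₃, ⟨hU₃A, hU₃, hU₃1⟩, h12, h13, h23⟩ :=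
    (Set.two_lt_ncard (Set.finite_of_ncard_pos (by omega))).mp (not_le.mp hcard)
  obtain ⟨z₁, hz₁, hz₁0⟩ := exists_mem_ne_zero_of_finrank_eq_one hU₁1
  obtain ⟨z₂, hz₂, hz₂0⟩ := exists_mem_ne_zero_of_finrank_eq_one hU₂1
  obtain ⟨z₃, hz₃, hz₃0⟩ := exists_mem_ne_zero_of_finrank_eq_one hU₃1
  have hA12 : A = span K {z₁, z₂} := by
    rw [← sup_eq_of_finrank_eq_one hU₁1 hU₂1 h12 hU₁A hU₂A hA, span_insert,
      ← eq_span_singleton_of_mem_of_finrank_eq_one hU₁1 hz₁ hz₁0,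
      ← eq_span_singleton_of_mem_of_finrank_eq_one hU₂1 hz₂ hz₂0]
  obtain ⟨a, d, rfl⟩ := mem_span_pair.mp (hA12 ▸ hU₃A hz₃)
  have ha : a ≠ 0 := by
    rintro rfl
    rw [zero_smul, zero_add] at hz₃ hz₃0
    exact h23 (eq_of_mem_of_finrank_eq_one hU₂1 hU₃1 (U₂.smul_mem d hz₂) hz₃ hz₃0)
  have hd : d ≠ 0 := by
    rintro rfl
    rw [zero_smul, add_zero] at hz₃ hz₃0
    exact h13 (eq_of_mem_of_finrank_eq_one hU₁1 hU₃1 (U₁.smul_mem a hz₁) hz₃ hz₃0)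
  have hx := hU₁.mul_self_eq_zero hU₁1 hU₁A hAAAA hz₁
  have hy := hU₂.mul_self_eq_zero hU₂1 hU₂A hAAAA hz₂
  have hxy := mul_eq_zero_of_mul_self_eq_zero hcomm h2 ha hd hx hy
    (hU₃.mul_self_eq_zero hU₃1 hU₃A hAAAA hz₃)
  exact hAA (hA12 ▸ mulSet_span_pair_eq_bot hcomm hx hy hxy)

theorem mem_span_singleton_of_sq_mem_span_singleton [CharP K 2] {ι : Type*} {u v : ι → K}
    (h : (fun i => v i ^ 2) ∈ span K {fun i => u i ^ 2}) : v ∈ span K {u} := by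
  obtain ⟨c, hc⟩ := mem_span_singleton.mp h
  have hc' : ∀ i, c * u i ^ 2 = v i ^ 2 := fun i => congrFun hc i
  rcases eq_or_ne u 0 with rfl | hu
  · have hv : v = 0 := funext fun i => by simpa using (hc' i).symm
    rw [hv]
    exact zero_mem _
  obtain ⟨j, hj⟩ : ∃ j, u j ≠ 0 := Function.ne_iff.mp hu
  refine mem_span_singleton.mpr ⟨v j / u j, funext fun i => CharTwo.sq_injective ?_⟩
  simp only [Pi.smul_apply, smul_eq_mul, mul_pow, div_pow, ← hc']
  field_simp

section Evolution

variable {ι : Type*} [Fintype ι] (b : Module.Basis ι K E)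

theorem evolution_mul_eq_linearCombination (hnat : ∀ i j, i ≠ j → μ (b i) (b j) = 0)
    (u v : E) :
    μ u v = Fintype.linearCombination K (fun i => μ (b i) (b i))
      (fun i => b.repr u i * b.repr v i) := by
  rw [Fintype.linearCombination_apply]
  conv_lhs => rw [← b.sum_repr u, ← b.sum_repr v]
  simp only [map_sum, map_smul, LinearMap.sum_apply, LinearMap.smul_apply]
  refine Finset.sum_congr rfl fun i _ => ?_
  rw [Finset.sum_eq_single i (fun j _ hji => by rw [hnat j i hji, smul_zero])
    (by simp), smul_smul, mul_comm]

theorem range_linearCombination_mul_self_basis (hnat : ∀ i j, i ≠ j → μ (b i) (b j) = 0) :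
    LinearMap.range (Fintype.linearCombination K fun i => μ (b i) (b i)) = mulSet μ ⊤ ⊤ := by
  refine le_antisymm ?_ (mulSet_le_iff.mpr fun u _ v _ => ?_)
  · rw [Fintype.range_linearCombination, span_le]
    rintro _ ⟨i, rfl⟩
    exact mem_mulSet mem_top mem_top
  · rw [evolution_mul_eq_linearCombination b hnat]
    exact LinearMap.mem_range_self _ _

theorem mem_span_singleton_of_mul_self_eq_zero [CharP K 2]
    (hnat : ∀ i j, i ≠ j → μ (b i) (b j) = 0)
    (hE2 : finrank K (mulSet μ ⊤ ⊤) + 1 = Fintype.card ι) {x y : E} (hx0 : x ≠ 0)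
    (hx : μ x x = 0) (hy : μ y y = 0) : y ∈ span K {x} := by
  set φ := Fintype.linearCombination K fun i => μ (b i) (b i)
  have hker : finrank K (LinearMap.ker φ) = 1 := by
    have := LinearMap.finrank_range_add_finrank_ker φ
    rw [range_linearCombination_mul_self_basis b hnat, Module.finrank_fintype_fun_eq_card] at this
    omega
  have hsq : ∀ z, μ z z = 0 → (fun i => b.equivFun z i ^ 2) ∈ LinearMap.ker φ := fun z hz => by
    simpa only [LinearMap.mem_ker, Basis.equivFun_apply, sq, φ,
      ← evolution_mul_eq_linearCombination b hnat] using hz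
  have hsqx : (fun i => b.equivFun x i ^ 2) ≠ 0 := fun h =>
    hx0 <| b.equivFun.map_eq_zero_iff.mp <| funext fun i =>
      (pow_eq_zero_iff two_ne_zero).mp (congrFun h i)
  have hyx := eq_span_singleton_of_mem_of_finrank_eq_one hker (hsq x hx) hsqx ▸ hsq y hy
  obtain ⟨c, hc⟩ := mem_span_singleton.mp (mem_span_singleton_of_sq_mem_span_singleton hyx)
  exact mem_span_singleton.mpr ⟨c, b.equivFun.injective (by rw [map_smul, hc])⟩

theorem lineSubalgs_subsingleton [CharP K 2] (hnat : ∀ i j, i ≠ j → μ (b i) (b j) = 0)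
    (hE2 : finrank K (mulSet μ ⊤ ⊤) + 1 = Fintype.card ι) {A : Submodule K E}
    (hAAAA : mulSet μ (mulSet μ A A) (mulSet μ A A) = ⊥) : (lineSubalgs μ A).Subsingleton := by
  rintro U₁ ⟨hU₁A, hU₁, hU₁1⟩ U₂ ⟨hU₂A, hU₂, hU₂1⟩
  obtain ⟨z₁, hz₁, hz₁0⟩ := exists_mem_ne_zero_of_finrank_eq_one hU₁1
  obtain ⟨z₂, hz₂, hz₂0⟩ := exists_mem_ne_zero_of_finrank_eq_one hU₂1
  have hz₂U₁ : z₂ ∈ U₁ := (span_singleton_le_iff_mem _ _).mpr hz₁ <|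
    mem_span_singleton_of_mul_self_eq_zero b hnat hE2 hz₁0
      (hU₁.mul_self_eq_zero hU₁1 hU₁A hAAAA hz₁) (hU₂.mul_self_eq_zero hU₂1 hU₂A hAAAA hz₂)
  exact eq_of_mem_of_finrank_eq_one hU₁1 hU₂1 hz₂U₁ hz₂ hz₂0

end Evolution

end

/-- if `E` is an `n`-dimensional solvable evolution algebra with maximum
index of solvability, then `E^(n-1)` has at most two one-dimensional subalgebras. -/
theorem stmt3 {n : ℕ} (hn : 2 ≤ n) (μ : E →ₗ[K] E →ₗ[K] E)
    (hcomm : ∀ x y : E, μ x y = μ y x)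
    (b : Module.Basis (Fin n) K E)
    (hnat : ∀ i j : Fin n, i ≠ j → μ (b i) (b j) = 0)
    (hmaxsolv : dser μ ⊤ n = ⊥ ∧ dser μ ⊤ (n - 1) ≠ ⊥) :
    Set.ncard {U : Submodule K E |
      U ≤ dser μ ⊤ (n - 2) ∧ IsSubalg μ U ∧ Module.finrank K U = 1} ≤ 2 := by
  have : FiniteDimensional K E := b.finiteDimensional_of_finite
  obtain ⟨hbot, hne⟩ := hmaxsolv
  have hdim : ∀ k ≤ n, finrank K (dser μ ⊤ k) = n - k :=
    fun k => finrank_dser_top (by rw [finrank_eq_card_basis b, Fintype.card_fin]) hbot hne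
  set A := dser μ ⊤ (n - 2)
  have hAA : mulSet μ A A = dser μ ⊤ (n - 1) := by
    rw [← dser_succ, show n - 2 + 1 = n - 1 by omega]
  have hAAAA : mulSet μ (mulSet μ A A) (mulSet μ A A) = ⊥ := by
    rw [hAA, ← dser_succ, show n - 1 + 1 = n by omega, hbot]
  change (lineSubalgs μ A).ncard ≤ 2
  by_cases h2 : (2 : K) = 0
  · have : CharP K 2 := CharTwo.of_one_ne_zero_of_two_eq_zero one_ne_zero h2
    have hE2 : finrank K (mulSet μ ⊤ ⊤) + 1 = Fintype.card (Fin n) := by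
      rw [show mulSet μ ⊤ ⊤ = dser μ ⊤ 1 from rfl, hdim 1 (by omega), Fintype.card_fin]
      omega
    have hS := lineSubalgs_subsingleton b hnat hE2 hAAAA
    exact ((Set.ncard_le_one hS.finite).mpr fun _ hU _ hV => hS hU hV).trans one_le_two
  · exact ncard_lineSubalgs_le_two hcomm h2 (by rw [hdim _ (by omega)]; omega) (hAA ▸ hne) hAAAA
end

section
/- Let E be a finite-dimensional supersolvable (not necessarily evolution) algebra over a field. Then every maximal subalgebra of E has codimension 1. -/
open Submodule

variable {K : Type} [Field K] {E : Type} [AddCommGroup E] [Module K E]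

/-- in a finite-dimensional supersolvable algebra, every maximal
subalgebra has codimension 1. -/
theorem stmt5 [FiniteDimensional K E] (μ : E →ₗ[K] E →ₗ[K] E)
    (hss : Supersolvable μ)
    (M : Submodule K E) (hM : IsSubalg μ M) (hMne : M ≠ ⊤)
    (hmax : ∀ W : Submodule K E, IsSubalg μ W → M ≤ W → W = M ∨ W = ⊤) :
    Module.finrank K E = Module.finrank K M + 1 := by
  classical
  obtain ⟨I, hI, hmono, hdim, htop⟩ := hss
  set n := Module.finrank K E with hn
  have hEx : ∃ k, ¬ I k ≤ M := by
    refine ⟨n, ?_⟩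
    rw [htop]
    intro h
    exact hMne (top_le_iff.mp h)
  let k := Nat.find hEx
  have hk : ¬ I k ≤ M := Nat.find_spec hEx
  have hk1 : ∀ j < k, I j ≤ M := fun j hj => not_not.mp (Nat.find_min hEx hj)
  have hkn : k ≤ n := Nat.find_min' hEx (by
    rw [htop]; intro h; exact hMne (top_le_iff.mp h))
  have hkpos : 0 < k := by
    rcases Nat.eq_zero_or_pos k with h0 | h
    · exfalso
      apply hk
      have h0' : Module.finrank K (I k) = 0 := by
        rw [show k = 0 from h0]; exact hdim 0 (Nat.zero_le _)
      have : I k = ⊥ := Submodule.finrank_eq_zero.mp h0'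
      rw [this]; exact bot_le
    · exact h
  have hsub : IsSubalg μ (M ⊔ I k) := by
    intro x hx y hy
    rw [Submodule.mem_sup] at hx hy ⊢
    obtain ⟨m, hm, a, ha, rfl⟩ := hx
    obtain ⟨m', hm', a', ha', rfl⟩ := hy
    refine ⟨μ m m', hM m hm m' hm', μ m a' + μ a m' + μ a a', ?_, ?_⟩
    · exact add_mem (add_mem (hI k a' ha' m).2 (hI k a ha m').1) (hI k a ha a').1
    · simp only [map_add, LinearMap.add_apply]
      abel
  have hsupT : M ⊔ I k = ⊤ := by
    rcases hmax _ hsub le_sup_left with h | h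
    · exact absurd (le_trans le_sup_right h.le) hk
    · exact h
  have hle : I (k - 1) ≤ M ⊓ I k := by
    refine le_inf (hk1 _ (Nat.sub_lt hkpos one_pos)) ?_
    have := hmono (k - 1)
    rwa [Nat.sub_add_cancel hkpos] at this
  have hdk : Module.finrank K (I k) = k := hdim k hkn
  have hdk1 : Module.finrank K (I (k - 1)) = k - 1 :=
    hdim _ (le_trans (Nat.sub_le _ _) hkn)
  have h1 : k - 1 ≤ Module.finrank K ↥(M ⊓ I k) := by
    rw [← hdk1]
    exact Submodule.finrank_mono hle
  have h2 : Module.finrank K ↥(M ⊓ I k) < k := by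
    have hlt : M ⊓ I k < I k := lt_of_le_of_ne inf_le_right (by
      intro h
      exact hk (h ▸ inf_le_left))
    have := Submodule.finrank_lt_finrank_of_lt hlt
    rwa [hdk] at this
  have hkey := Submodule.finrank_sup_add_finrank_inf_eq M (I k)
  rw [hsupT, finrank_top, hdk] at hkey
  omega
end

section
/- Let E be a finite-dimensional supersolvable (not necessarily evolution) algebra. Then E is lower semimodular: for all subalgebras U, V of E, if V is maximal in the subalgebra generated by U and V, then U ∩ V is maximal in U. -/
open Submodule

variable {K : Type} [Field K] {E : Type} [AddCommGroup E] [Module K E]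

section Aux

lemma gen_isSubalg (μ : E →ₗ[K] E →ₗ[K] E) (s : Set E) : IsSubalg μ (gen μ s) := by
  intro x hx y hy
  rw [gen, Submodule.mem_sInf] at *
  intro W hW
  exact hW.1 x (hx W hW) y (hy W hW)

lemma subset_gen (μ : E →ₗ[K] E →ₗ[K] E) (s : Set E) : s ⊆ (gen μ s : Set E) := by
  intro x hx
  rw [SetLike.mem_coe, gen, Submodule.mem_sInf]
  exact fun W hW => hW.2 hx

lemma gen_le (μ : E →ₗ[K] E →ₗ[K] E) {s : Set E} {W : Submodule K E}
    (hW : IsSubalg μ W) (h : s ⊆ W) : gen μ s ≤ W :=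
  sInf_le ⟨hW, h⟩

/-- In a supersolvable algebra, a maximal subalgebra of a subalgebra has codimension one. -/
lemma maxIn_codim_one [FiniteDimensional K E] (μ : E →ₗ[K] E →ₗ[K] E)
    (hss : Supersolvable μ) {V B : Submodule K E} (hB : IsSubalg μ B) (hV : IsSubalg μ V)
    (hmax : MaxIn μ V B) :
    Module.finrank K V + 1 = Module.finrank K B := by
  obtain ⟨I, hIdeal, hmono, hdim, htop⟩ := hss
  obtain ⟨hVB, hVne, hmaxi⟩ := hmax
  set n := Module.finrank K E with hn
  set J : ℕ → Submodule K E := fun i => I i ⊓ B with hJ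
  have hJB : ∀ i, J i ≤ B := fun i => inf_le_right
  have hJn : J n = B := by simp [hJ, htop]
  have hnotle : ¬ B ≤ V := fun h => hVne (le_antisymm hVB h)
  have hPn : ¬ J n ≤ V := by rw [hJn]; exact hnotle
  classical
  have hex : ∃ k, ¬ J k ≤ V := ⟨n, hPn⟩
  set k := Nat.find hex with hk
  have hkP : ¬ J k ≤ V := Nat.find_spec hex
  have hkn : k ≤ n := Nat.find_le hPn
  have hI0 : I 0 = ⊥ := Submodule.finrank_eq_zero.mp (hdim 0 (Nat.zero_le _))
  have hk0 : k ≠ 0 := by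
    intro h
    apply hkP
    rw [h]
    simp [hJ, hI0]
  obtain ⟨m, hm⟩ : ∃ m, k = m + 1 :=
    ⟨k - 1, (Nat.succ_pred_eq_of_pos (Nat.pos_of_ne_zero hk0)).symm⟩
  have hJm : J m ≤ V := by
    by_contra h
    have := Nat.find_le (h := hex) h
    omega
  have hJmk : J m ≤ J k := inf_le_inf_right B (by rw [hm]; exact hmono m)
  -- dimension jump of J is at most 1
  have hjump : Module.finrank K (J k) ≤ Module.finrank K (J m) + 1 := by
    have h1 : Module.finrank K ↥(J k ⊔ I m) + Module.finrank K ↥(J k ⊓ I m)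
        = Module.finrank K (J k) + Module.finrank K (I m) :=
      Submodule.finrank_sup_add_finrank_inf_eq _ _
    have h2 : J k ⊓ I m = J m := by
      show I k ⊓ B ⊓ I m = I m ⊓ B
      rw [hm, inf_comm (I (m+1) ⊓ B) (I m), ← inf_assoc, inf_eq_left.mpr (hmono m)]
    have h3 : J k ⊔ I m ≤ I k :=
      sup_le inf_le_left (by rw [hm]; exact hmono m)
    have h4 : Module.finrank K ↥(J k ⊔ I m) ≤ Module.finrank K (I k) :=
      Submodule.finrank_mono h3
    have h5 : Module.finrank K (I k) = k := hdim k hkn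
    have h6 : Module.finrank K (I m) = m := hdim m (by omega)
    rw [h2] at h1
    omega
  -- V ⊔ J k is a subalgebra
  have hWsub : IsSubalg μ (V ⊔ J k) := by
    intro x hx y hy
    rw [Submodule.mem_sup] at hx hy
    obtain ⟨v, hv, j, hj, rfl⟩ := hx
    obtain ⟨v', hv', j', hj', rfl⟩ := hy
    obtain ⟨hjI, hjB⟩ := Submodule.mem_inf.mp hj
    obtain ⟨hj'I, hj'B⟩ := Submodule.mem_inf.mp hj'
    have hvB : v ∈ B := hVB hv
    have hv'B : v' ∈ B := hVB hv'
    have expand : μ (v + j) (v' + j') = μ v v' + (μ v j' + (μ j v' + μ j j')) := by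
      simp [map_add, add_assoc, add_left_comm]
    rw [expand]
    refine Submodule.add_mem _ (Submodule.mem_sup_left (hV v hv v' hv')) ?_
    refine Submodule.add_mem _
      (Submodule.mem_sup_right (Submodule.mem_inf.mpr ⟨(hIdeal k j' hj'I v).2, hB v hvB j' hj'B⟩)) ?_
    refine Submodule.add_mem _
      (Submodule.mem_sup_right (Submodule.mem_inf.mpr ⟨(hIdeal k j hjI v').1, hB j hjB v' hv'B⟩)) ?_
    exact Submodule.mem_sup_right (Submodule.mem_inf.mpr
      ⟨(hIdeal k j hjI j').1, hB j hjB j' hj'B⟩)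
  -- V ⊔ J k = B by maximality
  have hWB : V ⊔ J k = B := by
    rcases hmaxi (V ⊔ J k) hWsub le_sup_left (sup_le hVB (hJB k)) with h | h
    · exact absurd (le_sup_right.trans h.le) hkP
    · exact h
  -- dimension count
  have hsup : Module.finrank K ↥(V ⊔ J k) + Module.finrank K ↥(V ⊓ J k)
      = Module.finrank K V + Module.finrank K (J k) :=
    Submodule.finrank_sup_add_finrank_inf_eq _ _
  have hlow : Module.finrank K (J m) ≤ Module.finrank K ↥(V ⊓ J k) :=
    Submodule.finrank_mono (le_inf hJm hJmk)
  have hlt : Module.finrank K ↥(V ⊓ J k) < Module.finrank K (J k) :=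
    Submodule.finrank_lt_finrank_of_lt
      (lt_of_le_of_ne inf_le_right (fun h => hkP (h ▸ inf_le_left)))
  rw [hWB] at hsup
  omega

end Aux

/-- a finite-dimensional supersolvable algebra is lower semimodular:
if `V` is maximal in `⟨U,V⟩` then `U ⊓ V` is maximal in `U`. -/
theorem stmt6 [FiniteDimensional K E] (μ : E →ₗ[K] E →ₗ[K] E)
    (hss : Supersolvable μ)
    (U V : Submodule K E) (hU : IsSubalg μ U) (hV : IsSubalg μ V)
    (hmax : MaxIn μ V (gen μ (↑U ∪ ↑V))) :
    MaxIn μ (U ⊓ V) U := by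
  set B := gen μ (↑U ∪ ↑V) with hB
  have hBsub : IsSubalg μ B := gen_isSubalg μ _
  have hUB : U ≤ B := fun x hx => subset_gen μ _ (Set.mem_union_left _ hx)
  have hVB : V ≤ B := fun x hx => subset_gen μ _ (Set.mem_union_right _ hx)
  have hdimB : Module.finrank K V + 1 = Module.finrank K B :=
    maxIn_codim_one μ hss hBsub hV hmax
  have hnUV : ¬ U ≤ V := by
    intro h
    apply hmax.2.1
    exact le_antisymm hmax.1 (gen_le μ hV (Set.union_subset h le_rfl))
  have hne : U ⊓ V ≠ U := fun h => hnUV (by rw [← h]; exact inf_le_right)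
  have hsup : Module.finrank K ↥(U ⊔ V) + Module.finrank K ↥(U ⊓ V)
      = Module.finrank K U + Module.finrank K V :=
    Submodule.finrank_sup_add_finrank_inf_eq _ _
  have hsupB : Module.finrank K ↥(U ⊔ V) ≤ Module.finrank K B :=
    Submodule.finrank_mono (sup_le hUB hVB)
  have hltU : Module.finrank K ↥(U ⊓ V) < Module.finrank K U :=
    Submodule.finrank_lt_finrank_of_lt (lt_of_le_of_ne inf_le_left hne)
  have hdimU : Module.finrank K U = Module.finrank K ↥(U ⊓ V) + 1 := by omega
  refine ⟨inf_le_left, hne, fun W hW h1 h2 => ?_⟩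
  have hW1 : Module.finrank K ↥(U ⊓ V) ≤ Module.finrank K W := Submodule.finrank_mono h1
  have hW2 : Module.finrank K W ≤ Module.finrank K U := Submodule.finrank_mono h2
  rcases le_or_gt (Module.finrank K W) (Module.finrank K ↥(U ⊓ V)) with h | h
  · exact Or.inl (Submodule.eq_of_le_of_finrank_le h1 h).symm
  · exact Or.inr (Submodule.eq_of_le_of_finrank_le h2 (by omega))
end

section
/- Let E be an n-dimensional nilpotent evolution algebra whose structure matrix relative to a natural basis {e_1,...,e_n} is strictly upper triangular with all first-superdiagonal entries a_{i,i+1} nonzero (i.e., E has maximum index of nilpotency). Then for every element u with minimal support index k (i.e., u = Σ_{i≥k} μ_i e_i with μ_k ≠ 0), the subalgebra generated by u equals span{e_k, e_{k+1}, ..., e_n}. In particular, E is generated by any element of full support, and the subalgebra lattice of E is a chain of length n. -/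
open Submodule

variable {K : Type} [Field K] {E : Type} [AddCommGroup E] [Module K E]

/-!
If `u` has leading index `k`, then `u²` has leading index `k + 1`: strict upper triangularity
kills every coordinate of `u²` below `k + 1`, and its `(k + 1)`-st coordinate is `u_k² a_{k,k+1}`.
By downward induction on `k`, a subalgebra containing `u` therefore contains
`span {e_{k+1}, …}`, hence `u - u_k e_k`, hence `e_k`. Since each `span {e_k, …}` is itself a
subalgebra, every subalgebra is one of these nested spans.
-/

/-- `span {e_k, e_{k+1}, …}`, indexed by `k : ℕ` so that it is `⊥` for `k ≥ n`. -/
def tailSpan {n : ℕ} (b : Module.Basis (Fin n) K E) (k : ℕ) : Submodule K E :=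
  span K (b '' {j | k ≤ j.1})

section TailSpan

variable {n : ℕ} (b : Module.Basis (Fin n) K E)

theorem mem_tailSpan_iff {k : ℕ} {x : E} :
    x ∈ tailSpan b k ↔ ∀ j : Fin n, j.1 < k → b.repr x j = 0 := by
  rw [tailSpan, Module.Basis.mem_span_image]
  refine ⟨fun h j hj => ?_, fun h j hj => ?_⟩
  · by_contra hne
    exact (h (Finsupp.mem_support_iff.2 hne)).not_gt hj
  · by_contra hlt
    exact Finsupp.mem_support_iff.1 hj (h j (not_le.1 hlt))

theorem tailSpan_antitone : Antitone (tailSpan b) :=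
  fun _ _ hkl => span_mono (Set.image_mono fun _ hj => le_trans hkl hj)

theorem tailSpan_eq_bot {k : ℕ} (hk : n ≤ k) : tailSpan b k = ⊥ := by
  have : {j : Fin n | k ≤ j.1} = ∅ := Set.eq_empty_of_forall_notMem fun j hj => by
    have := j.2
    simp only [Set.mem_ofPred_eq] at hj
    omega
  rw [tailSpan, this, Set.image_empty, span_empty]

theorem tailSpan_eq_span_singleton_sup (k : Fin n) :
    tailSpan b k.1 = K ∙ b k ⊔ tailSpan b (k.1 + 1) := by
  have : {j : Fin n | k.1 ≤ j.1} = {k} ∪ {j | k.1 + 1 ≤ j.1} := by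
    ext j
    simp only [Set.mem_ofPred_eq, Set.mem_union, Set.mem_singleton_iff, Fin.ext_iff]
    omega
  rw [tailSpan, this, Set.image_union, Set.image_singleton, span_union, tailSpan]

theorem sub_repr_smul_mem_tailSpan_succ {k : Fin n} {u : E} (hu : u ∈ tailSpan b k.1) :
    u - b.repr u k • b k ∈ tailSpan b (k.1 + 1) := by
  rw [mem_tailSpan_iff] at hu ⊢
  intro j hj
  rcases (Nat.lt_succ_iff.1 hj).lt_or_eq with hjk | hjk
  · have hkj : k ≠ j := fun h => hjk.ne (congrArg Fin.val h).symm
    simp [hu j hjk, Finsupp.single_eq_of_ne' hkj]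
  · obtain rfl : j = k := Fin.ext hjk
    simp

end TailSpan

section Evolution

variable {n : ℕ} {μ : E →ₗ[K] E →ₗ[K] E} {b : Module.Basis (Fin n) K E}

theorem mul_self_eq_sum_basis (hnat : ∀ i j : Fin n, i ≠ j → μ (b i) (b j) = 0) (u : E) :
    μ u u = ∑ i, (b.repr u i * b.repr u i) • μ (b i) (b i) := by
  conv_lhs => rw [← b.sum_repr u]
  simp only [map_sum, map_smul, LinearMap.sum_apply, LinearMap.smul_apply]
  refine Finset.sum_congr rfl fun i _ => ?_
  rw [Finset.sum_eq_single i (fun j _ hji => by rw [hnat j i hji, smul_zero]) (by simp),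
    smul_smul]

variable (hnat : ∀ i j : Fin n, i ≠ j → μ (b i) (b j) = 0)
  (hupper : ∀ i k : Fin n, k ≤ i → b.repr (μ (b i) (b i)) k = 0)
include hnat hupper

theorem mul_mem_tailSpan_succ {m : ℕ} {x y : E} (hx : x ∈ tailSpan b m)
    (hy : y ∈ tailSpan b m) : μ x y ∈ tailSpan b (m + 1) := by
  suffices map₂ μ (tailSpan b m) (tailSpan b m) ≤ tailSpan b (m + 1) from
    this (apply_mem_map₂ μ hx hy)
  rw [tailSpan, map₂_span_span, span_le]
  rintro _ ⟨_, ⟨i, hi, rfl⟩, _, ⟨j, -, rfl⟩, rfl⟩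
  obtain rfl | hij := eq_or_ne i j
  · simp only [Set.mem_ofPred_eq] at hi
    exact (mem_tailSpan_iff b).2 fun t ht => hupper i t (by omega)
  · simp [hnat i j hij]

theorem isSubalg_tailSpan (m : ℕ) : IsSubalg μ (tailSpan b m) :=
  fun _ hx _ hy => tailSpan_antitone b m.le_succ (mul_mem_tailSpan_succ hnat hupper hx hy)

variable (hsd : ∀ i : ℕ, ∀ h : i + 1 < n,
  b.repr (μ (b ⟨i, Nat.lt_of_succ_lt h⟩) (b ⟨i, Nat.lt_of_succ_lt h⟩)) ⟨i + 1, h⟩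
    ≠ 0)
include hsd

theorem repr_mul_self_succ_ne_zero {k : Fin n} {u : E} (hu : u ∈ tailSpan b k.1)
    (huk : b.repr u k ≠ 0) (hk : k.1 + 1 < n) : b.repr (μ u u) ⟨k.1 + 1, hk⟩ ≠ 0 := by
  rw [mul_self_eq_sum_basis hnat, map_sum, Finsupp.finsetSum_apply, Finset.sum_eq_single k]
  · simpa using mul_ne_zero (mul_ne_zero huk huk) (hsd k.1 hk)
  · intro i _ hik
    rcases hik.lt_or_gt with hlt | hgt
    · simp [(mem_tailSpan_iff b).1 hu i hlt]
    · simp [hupper i _ (Fin.mk_le_of_le_val hgt)]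
  · simp

theorem tailSpan_le_of_mem {W : Submodule K E} (hW : IsSubalg μ W) (k : Fin n) {u : E}
    (huW : u ∈ W) (hu : u ∈ tailSpan b k.1) (huk : b.repr u k ≠ 0) :
    tailSpan b k.1 ≤ W := by
  have hnext : tailSpan b (k.1 + 1) ≤ W := by
    by_cases hk : k.1 + 1 < n
    · exact tailSpan_le_of_mem hW ⟨k.1 + 1, hk⟩ (hW u huW u huW)
        (mul_mem_tailSpan_succ hnat hupper hu hu)
        (repr_mul_self_succ_ne_zero hnat hupper hsd hu huk hk)
    · rw [tailSpan_eq_bot b (not_lt.1 hk)]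
      exact bot_le
  have hbk : b k ∈ W := by
    have := W.smul_mem (b.repr u k)⁻¹
      (W.sub_mem huW (hnext (sub_repr_smul_mem_tailSpan_succ b hu)))
    rwa [sub_sub_cancel, smul_smul, inv_mul_cancel₀ huk, one_smul] at this
  rw [tailSpan_eq_span_singleton_sup]
  exact sup_le ((span_singleton_le_iff_mem _ _).2 hbk) hnext
termination_by n - k.1

theorem gen_singleton_eq_tailSpan (k : Fin n) {u : E} (hu : u ∈ tailSpan b k.1)
    (huk : b.repr u k ≠ 0) : gen μ {u} = tailSpan b k.1 :=
  le_antisymm (sInf_le ⟨isSubalg_tailSpan hnat hupper k.1, Set.singleton_subset_iff.2 hu⟩)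
    (le_sInf fun _ hW => tailSpan_le_of_mem hnat hupper hsd hW.1 k (hW.2 rfl) hu huk)

/-- The index `k` is the least one occurring in the support of an element of `W`. -/
theorem exists_eq_tailSpan {W : Submodule K E} (hW : IsSubalg μ W) : ∃ k, W = tailSpan b k := by
  set S : Set (Fin n) := {j | ∃ w ∈ W, b.repr w j ≠ 0}
  rcases S.eq_empty_or_nonempty with hS | hS
  · refine ⟨n, le_antisymm (fun w hw => (mem_tailSpan_iff b).2 fun j _ => ?_) ?_⟩
    · by_contra hne
      exact hS.subset ⟨w, hw, hne⟩
    · rw [tailSpan_eq_bot b le_rfl]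
      exact bot_le
  obtain ⟨k, ⟨u, huW, huk⟩, hmin⟩ := S.exists_min_image id S.toFinite hS
  have hle : W ≤ tailSpan b k.1 := fun w hw => (mem_tailSpan_iff b).2 fun j hj => by
    by_contra hne
    exact (hmin j ⟨w, hw, hne⟩).not_gt hj
  exact ⟨k.1, le_antisymm hle (tailSpan_le_of_mem hnat hupper hsd hW k huW (hle huW) huk)⟩

end Evolution

/-- in a nilpotent evolution algebra with strictly upper triangular
structure matrix all of whose first-superdiagonal entries are nonzero (maximum index
of nilpotency), the subalgebra generated by any element with minimal support index `k`
is `span{e_k, …, e_n}`; in particular the subalgebra lattice is a chain. -/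
theorem stmt8 {n : ℕ} (μ : E →ₗ[K] E →ₗ[K] E)
    (b : Module.Basis (Fin n) K E)
    (hnat : ∀ i j : Fin n, i ≠ j → μ (b i) (b j) = 0)
    (hupper : ∀ i k : Fin n, k ≤ i → b.repr (μ (b i) (b i)) k = 0)
    (hsd : ∀ i : ℕ, ∀ h : i + 1 < n,
      b.repr (μ (b ⟨i, by omega⟩) (b ⟨i, by omega⟩)) ⟨i + 1, h⟩ ≠ 0) :
    (∀ u : E, ∀ k : Fin n, b.repr u k ≠ 0 → (∀ j : Fin n, j < k → b.repr u j = 0) →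
      gen μ {u} = Submodule.span K (b '' {j : Fin n | k ≤ j})) ∧
    (∀ U V : Submodule K E, IsSubalg μ U → IsSubalg μ V → U ≤ V ∨ V ≤ U) := by
  refine ⟨fun u k huk hmin => ?_, fun U V hU hV => ?_⟩
  · exact gen_singleton_eq_tailSpan hnat hupper hsd k ((mem_tailSpan_iff b).2 hmin) huk
  · obtain ⟨k, rfl⟩ := exists_eq_tailSpan hnat hupper hsd hU
    obtain ⟨l, rfl⟩ := exists_eq_tailSpan hnat hupper hsd hV
    exact (le_total l k).imp (fun h => tailSpan_antitone b h) (fun h => tailSpan_antitone b h)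
end

section
/- Let E be a nilpotent evolution algebra over a field of characteristic ≠ 2, with strictly upper triangular structure matrix relative to a natural basis. If every subalgebra of E is a quasi-ideal (equivalently E's subalgebra lattice is modular), then every absolute nilpotent element of E lies in the annihilator of E. -/
open Submodule

variable {K : Type} [Field K] {E : Type} [AddCommGroup E] [Module K E]

lemma isSubalg_span_singleton (μ : E →ₗ[K] E →ₗ[K] E) {u : E} (hu : μ u u = 0) :
    IsSubalg μ (span K {u}) := by
  intro x hx y hy
  obtain ⟨s, rfl⟩ := mem_span_singleton.1 hx
  obtain ⟨t, rfl⟩ := mem_span_singleton.1 hy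
  simp [hu]

lemma QuasiIdeal.isSubalg_sup {μ : E →ₗ[K] E →ₗ[K] E} {U V : Submodule K E}
    (hU : QuasiIdeal μ U) (hV : IsSubalg μ V) : IsSubalg μ (U ⊔ V) := by
  rw [← hU.2 V hV]
  exact gen_isSubalg μ _

namespace Module.Basis

variable {ι : Type*} {μ : E →ₗ[K] E →ₗ[K] E} (b : Basis ι K E)

lemma sq_basis_eq_zero_of_mem_span_pair [PartialOrder ι] {u : E} {i m : ι}
    (hupper : ∀ k ≤ i, b.repr (μ (b i) (b i)) k = 0) (hmi : m < i) (hm : b.repr u m ≠ 0)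
    (hmem : μ (b i) (b i) ∈ span K {u, b i}) : μ (b i) (b i) = 0 := by
  obtain ⟨p, q, hpq⟩ := mem_span_pair.1 hmem
  have hp : p = 0 := by
    simpa [hupper m hmi.le, hmi.ne', hm] using congrArg (fun z => b.repr z m) hpq
  have hq : q = 0 := by
    simpa [hupper i le_rfl, hp] using congrArg (fun z => b.repr z i) hpq
  simp [← hpq, hp, hq]

variable (hnat : ∀ i j, i ≠ j → μ (b i) (b j) = 0)
include hnat

lemma mul_basis_eq (u : E) (i : ι) : μ u (b i) = b.repr u i • μ (b i) (b i) := by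
  classical
  conv_lhs => rw [← b.linearCombination_repr u, Finsupp.linearCombination_apply, Finsupp.sum]
  rw [map_sum, LinearMap.sum_apply, Finset.sum_eq_single i]
  · simp
  · intro j _ hji
    simp [hnat j i hji]
  · intro hi
    simp [Finsupp.notMem_support_iff.1 hi]

lemma basis_mul_eq (u : E) (i : ι) : μ (b i) u = b.repr u i • μ (b i) (b i) := by
  classical
  conv_lhs => rw [← b.linearCombination_repr u, Finsupp.linearCombination_apply, Finsupp.sum]
  rw [map_sum, Finset.sum_eq_single i]
  · simp
  · intro j _ hji
    simp [hnat i j hji.symm]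
  · intro hi
    simp [Finsupp.notMem_support_iff.1 hi]

lemma mul_eq_sum (u y : E) :
    μ u y = ∑ j ∈ (b.repr y).support, b.repr y j • b.repr u j • μ (b j) (b j) := by
  conv_lhs => rw [← b.linearCombination_repr y, Finsupp.linearCombination_apply, Finsupp.sum]
  rw [map_sum]
  exact Finset.sum_congr rfl fun j _ => by rw [map_smul, b.mul_basis_eq hnat]

lemma sq_sub_two_smul_basis_eq_zero {u : E} (hu : μ u u = 0) (i : ι) :
    μ (u - (2 * b.repr u i) • b i) (u - (2 * b.repr u i) • b i) = 0 := by
  simp only [map_sub, map_smul, LinearMap.sub_apply, LinearMap.smul_apply, hu,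
    b.mul_basis_eq hnat u i, b.basis_mul_eq hnat u i, smul_smul]
  module

lemma sq_basis_mem_span_pair (h2 : (2 : K) ≠ 0) {u : E} (hu : μ u u = 0)
    (hqi : QuasiIdeal μ (span K {u})) {i : ι} (hi : b.repr u i ≠ 0) :
    μ (b i) (b i) ∈ span K {u, b i} := by
  set a := 2 * b.repr u i
  have ha : a ≠ 0 := mul_ne_zero h2 hi
  set v := u - a • b i
  set W := span K {u} ⊔ span K {v}
  have hW : IsSubalg μ W :=
    hqi.isSubalg_sup (isSubalg_span_singleton μ (b.sq_sub_two_smul_basis_eq_zero hnat hu i))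
  have huW : u ∈ W := mem_sup_left (mem_span_singleton_self u)
  have hbW : b i ∈ W := by
    have hb : b i = a⁻¹ • (u - v) := by simp [v, smul_smul, inv_mul_cancel₀ ha]
    rw [hb]
    exact smul_mem _ _ (sub_mem huW (mem_sup_right (mem_span_singleton_self v)))
  have hWle : W ≤ span K {u, b i} := by
    have hv : v ∈ span K {u, b i} := mem_span_pair.2 ⟨1, -a, by simp [v, sub_eq_add_neg]⟩
    exact sup_le (span_mono (by simp)) (span_le.2 (by simpa using hv))
  have hmem := hWle (hW u huW (b i) hbW)
  rw [b.mul_basis_eq hnat] at hmem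
  exact (smul_mem_iff _ hi).1 hmem

lemma sq_basis_eq_zero_of_mem_support [LinearOrder ι] {u : E} (hu : μ u u = 0)
    (hupper : ∀ i k, k ≤ i → b.repr (μ (b i) (b i)) k = 0)
    (hspan : ∀ i, b.repr u i ≠ 0 → μ (b i) (b i) ∈ span K {u, b i}) :
    ∀ j ∈ (b.repr u).support, μ (b j) (b j) = 0 := by
  intro j hj
  set m := (b.repr u).support.min' ⟨j, hj⟩
  have hm : b.repr u m ≠ 0 := Finsupp.mem_support_iff.1 (Finset.min'_mem _ _)
  have hlater (i : ι) (hi : i ∈ (b.repr u).support) (hmi : m < i) : μ (b i) (b i) = 0 :=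
    b.sq_basis_eq_zero_of_mem_span_pair (hupper i) hmi hm (hspan i (Finsupp.mem_support_iff.1 hi))
  have hsq_min : μ (b m) (b m) = 0 := by
    have h := b.mul_eq_sum hnat u u
    rw [hu, Finset.sum_eq_single_of_mem m (Finset.min'_mem _ _) fun i hi him => by
        rw [hlater i hi ((Finset.min'_le _ i hi).lt_of_ne' him), smul_zero, smul_zero],
      smul_smul] at h
    exact (smul_eq_zero.1 h.symm).resolve_left (mul_ne_zero hm hm)
  rcases (Finset.min'_le _ j hj).eq_or_lt with h | h
  · rwa [← h]
  · exact hlater j hj h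

end Module.Basis

theorem stmt10_general {n : ℕ} (h2 : (2 : K) ≠ 0) (μ : E →ₗ[K] E →ₗ[K] E)
    (b : Module.Basis (Fin n) K E)
    (hnat : ∀ i j : Fin n, i ≠ j → μ (b i) (b j) = 0)
    (hupper : ∀ i k : Fin n, k ≤ i → b.repr (μ (b i) (b i)) k = 0)
    (hqi : ∀ U : Submodule K E, IsSubalg μ U → QuasiIdeal μ U) :
    ∀ u : E, μ u u = 0 → ∀ y : E, μ u y = 0 := by
  intro u hu y
  have hsq := b.sq_basis_eq_zero_of_mem_support hnat hu hupper fun i hi =>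
    b.sq_basis_mem_span_pair hnat h2 hu (hqi _ (isSubalg_span_singleton μ hu)) hi
  rw [b.mul_eq_sum hnat]
  refine Finset.sum_eq_zero fun j _ => ?_
  by_cases hj : j ∈ (b.repr u).support
  · simp [hsq j hj]
  · simp [Finsupp.notMem_support_iff.1 hj]

/-- in a nilpotent evolution algebra over a field of characteristic ≠ 2
(strictly upper triangular structure matrix), if every subalgebra is a quasi-ideal
(equivalently the subalgebra lattice is modular), then every absolute nilpotent
element lies in the annihilator. -/
theorem stmt10 {n : ℕ} (h2 : (2 : K) ≠ 0) (μ : E →ₗ[K] E →ₗ[K] E)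
    (hcomm : ∀ x y : E, μ x y = μ y x)
    (b : Module.Basis (Fin n) K E)
    (hnat : ∀ i j : Fin n, i ≠ j → μ (b i) (b j) = 0)
    (hupper : ∀ i k : Fin n, k ≤ i → b.repr (μ (b i) (b i)) k = 0)
    (hqi : ∀ U : Submodule K E, IsSubalg μ U → QuasiIdeal μ U) :
    ∀ u : E, μ u u = 0 → ∀ y : E, μ u y = 0 :=
  stmt10_general h2 μ b hnat hupper hqi
end

section
/- Let E be the 3-dimensional evolution algebra over ℝ with natural basis {e_1, e_2, e_3} and product e_1^2 = e_2^2 = e_3, e_3^2 = 0. Then every subalgebra of E is a quasi-ideal, and hence the subalgebra lattice of E is modular. Moreover the only one-dimensional subalgebra of E is span{e_3}. -/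
open Submodule

variable {K : Type} [Field K] {E : Type} [AddCommGroup E] [Module K E]

/-- The evolution-algebra multiplication on `Fin n → K` determined by the values
`c i = eᵢ²` on the standard basis: `x·y = ∑ i, (xᵢ yᵢ) • c i`. -/
noncomputable def evolMul {K : Type} [Field K] {n : ℕ} (c : Fin n → (Fin n → K)) :
    (Fin n → K) →ₗ[K] (Fin n → K) →ₗ[K] (Fin n → K) where
  toFun x :=
    { toFun := fun y => ∑ i, (x i * y i) • c i
      map_add' := by
        intro y z
        simp [Pi.add_apply, mul_add, add_smul, Finset.sum_add_distrib]
      map_smul' := by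
        intro a y
        simp [Pi.smul_apply, smul_smul, Finset.smul_sum, mul_left_comm] }
  map_add' := by
    intro x z
    ext y
    simp [Pi.add_apply, add_mul, add_smul, Finset.sum_add_distrib]
  map_smul' := by
    intro a x
    ext y
    simp [Pi.smul_apply, smul_smul, Finset.smul_sum, mul_assoc, Finset.mul_sum]

namespace Stmt14Aux

noncomputable abbrev μ3 : (Fin 3 → ℝ) →ₗ[ℝ] (Fin 3 → ℝ) →ₗ[ℝ] (Fin 3 → ℝ) :=
  evolMul ![Pi.single 2 1, Pi.single 2 1, 0]

noncomputable abbrev e3 : Fin 3 → ℝ := Pi.single 2 1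

lemma mul_eq (x y : Fin 3 → ℝ) :
    μ3 x y = (x 0 * y 0 + x 1 * y 1) • e3 := by
  show ∑ i, (x i * y i) • (![Pi.single 2 1, Pi.single 2 1, (0 : Fin 3 → ℝ)] i) = _
  rw [Fin.sum_univ_three]
  simp [add_smul]

lemma e3_ne_zero : e3 ≠ 0 := by
  intro h
  have := congrFun h 2
  simp [e3] at this

lemma mem_L (x : Fin 3 → ℝ) :
    x ∈ Submodule.span ℝ {e3} ↔ x 0 = 0 ∧ x 1 = 0 := by
  rw [Submodule.mem_span_singleton]
  constructor
  · rintro ⟨a, rfl⟩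
    simp [e3]
  · rintro ⟨h0, h1⟩
    refine ⟨x 2, ?_⟩
    funext i
    fin_cases i <;> simp [e3, h0, h1]

lemma e3_mem {U : Submodule ℝ (Fin 3 → ℝ)} (hU : IsSubalg μ3 U)
    {x : Fin 3 → ℝ} (hx : x ∈ U) (hxL : x ∉ Submodule.span ℝ {e3}) : e3 ∈ U := by
  have hc : x 0 * x 0 + x 1 * x 1 ≠ 0 := by
    rw [mem_L] at hxL
    intro h
    exact hxL ⟨by nlinarith [sq_nonneg (x 0), sq_nonneg (x 1)],
      by nlinarith [sq_nonneg (x 0), sq_nonneg (x 1)]⟩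
  have hm : μ3 x x ∈ U := hU x hx x hx
  rw [mul_eq] at hm
  have := U.smul_mem (x 0 * x 0 + x 1 * x 1)⁻¹ hm
  rwa [smul_smul, inv_mul_cancel₀ hc, one_smul] at this

lemma prod_mem_L (x y : Fin 3 → ℝ) : μ3 x y ∈ Submodule.span ℝ {e3} := by
  rw [mul_eq]
  exact Submodule.smul_mem _ _ (Submodule.subset_span rfl)

lemma sup_subalg {U V : Submodule ℝ (Fin 3 → ℝ)} (hU : IsSubalg μ3 U)
    (hV : IsSubalg μ3 V) : IsSubalg μ3 (U ⊔ V) := by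
  by_cases h : Submodule.span ℝ {e3} ≤ U ⊔ V
  · intro x _ y _
    exact h (prod_mem_L x y)
  · intro x hx y hy
    have hL : ∀ z ∈ U ⊔ V, z ∈ Submodule.span ℝ {e3} := by
      intro z hz
      by_contra hzL
      rcases Submodule.mem_sup.mp hz with ⟨u, hu, v, hv, rfl⟩
      by_cases huL : u ∈ Submodule.span ℝ {e3}
      · have hvL : v ∉ Submodule.span ℝ {e3} := fun hvL => hzL (Submodule.add_mem _ huL hvL)
        exact h (le_trans (Submodule.span_le.mpr (by
          simpa using Submodule.mem_sup_right (e3_mem hV hv hvL))) le_rfl)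
      · exact h (Submodule.span_le.mpr (by
          simpa using Submodule.mem_sup_left (e3_mem hU hu huL)))
    have hx0 := (mem_L x).mp (hL x hx)
    have hy0 := (mem_L y).mp (hL y hy)
    rw [mul_eq, hx0.1, hy0.1, hx0.2, hy0.2]
    simp

lemma gen_sup {U V : Submodule ℝ (Fin 3 → ℝ)} (hU : IsSubalg μ3 U)
    (hV : IsSubalg μ3 V) : gen μ3 (↑U ∪ ↑V) = U ⊔ V := by
  apply le_antisymm
  · exact sInf_le ⟨sup_subalg hU hV,
      Set.union_subset (SetLike.coe_subset_coe.mpr le_sup_left)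
        (SetLike.coe_subset_coe.mpr le_sup_right)⟩
  · apply le_sInf
    rintro W ⟨_, hsub⟩
    rw [Set.union_subset_iff] at hsub
    exact sup_le (SetLike.coe_subset_coe.mp hsub.1) (SetLike.coe_subset_coe.mp hsub.2)

lemma inf_subalg {V W : Submodule ℝ (Fin 3 → ℝ)} (hV : IsSubalg μ3 V)
    (hW : IsSubalg μ3 W) : IsSubalg μ3 (V ⊓ W) := by
  intro x hx y hy
  exact ⟨hV x hx.1 y hy.1, hW x hx.2 y hy.2⟩

end Stmt14Aux

/-- the real evolution algebra with `e₁² = e₂² = e₃`, `e₃² = 0`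
(and `eᵢeⱼ = 0` for `i ≠ j`): every subalgebra is a quasi-ideal, hence the subalgebra
lattice is modular, and the only one-dimensional subalgebra is `span{e₃}`. -/

theorem stmt14 :
    (∀ U : Submodule ℝ (Fin 3 → ℝ),
      IsSubalg (evolMul ![Pi.single 2 1, Pi.single 2 1, 0]) U →
        QuasiIdeal (evolMul ![Pi.single 2 1, Pi.single 2 1, 0]) U) ∧
    ModularLat (evolMul ![Pi.single 2 1, Pi.single 2 1, (0 : Fin 3 → ℝ)]) ∧
    (∀ U : Submodule ℝ (Fin 3 → ℝ),
      IsSubalg (evolMul ![Pi.single 2 1, Pi.single 2 1, 0]) U →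
        (Module.finrank ℝ U = 1 ↔
          U = Submodule.span ℝ {(Pi.single 2 1 : Fin 3 → ℝ)})) := by
  refine ⟨?_, ?_, ?_⟩
  · intro U hU
    exact ⟨hU, fun V hV => Stmt14Aux.gen_sup hU hV⟩
  · intro U V W hU hV hW hUW
    rw [Stmt14Aux.gen_sup hU (Stmt14Aux.inf_subalg hV hW), Stmt14Aux.gen_sup hU hV]
    exact (sup_inf_assoc_of_le V hUW).symm
  · intro U hU
    constructor
    · intro h1
      by_cases hL : U ≤ Submodule.span ℝ {Stmt14Aux.e3}
      · apply Submodule.eq_of_le_of_finrank_eq hL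
        rw [h1, finrank_span_singleton Stmt14Aux.e3_ne_zero]
      · exfalso
        rcases SetLike.not_le_iff_exists.mp hL with ⟨x, hx, hxL⟩
        have he3 : Stmt14Aux.e3 ∈ U := Stmt14Aux.e3_mem hU hx hxL
        have hlt : Submodule.span ℝ {Stmt14Aux.e3} < U := by
          refine lt_of_le_of_ne (Submodule.span_le.mpr (by simpa using he3)) ?_
          intro h; exact hxL (h ▸ hx)
        have := Submodule.finrank_lt_finrank_of_lt hlt
        rw [h1, finrank_span_singleton Stmt14Aux.e3_ne_zero] at this
        exact lt_irrefl 1 this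
    · rintro rfl
      exact finrank_span_singleton Stmt14Aux.e3_ne_zero
end
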